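/- arXiv:1911.08055 — 2 statements merged into one kernel-verified Lean document; each statement's English description precedes it below -/
import Mathlib

section
/- Let R be a commutative ring, A and B be R-modules annihilated by a ∈ R and b ∈ R respectively, and suppose f·a + g·b = c for some f, g ∈ R and a nonzero integer c (R being a Z-algebra). Let N be an R-module that is torsion-free over Z and let φ : A ⊕ B → N be an R-linear map with kernel P. Then P = (P ∩ A) ⊕ (P ∩ B). -/
/-! If `φ (x, y) = 0`, then `c • (x, 0) = (f a + g b) • (x, 0) = g b • (x, y)` because `a` kills `x`
and `b` kills `y`; hence `c • φ (x, 0) = 0`, and `φ (x, 0) = 0` since `N` has no `ℤ`-torsion.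
The `B`-component then lies in the kernel as `(0, y) = (x, y) - (x, 0)`. -/

section

variable {R A B N : Type*} [CommRing R] [AddCommGroup A] [AddCommGroup B] [AddCommGroup N]
  [Module R A] [Module R B] [Module R N]

theorem Prod.smul_mk_zero_eq_smul_of_annihilated {a b f g r : R} {x : A} {y : B}
    (hx : a • x = 0) (hy : b • y = 0) (hfg : f * a + g * b = r) :
    r • ((x, 0) : A × B) = (g * b) • (x, y) := by
  subst hfg
  ext
  · simp only [Prod.smul_fst, Prod.fst_add, add_smul, mul_smul, hx, smul_zero, zero_add]
  · simp only [Prod.smul_snd, smul_zero, mul_smul, hy]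

theorem LinearMap.mk_zero_mem_ker_of_mk_mem_ker [NoZeroSMulDivisors ℤ N]
    {a b f g : R} {c : ℤ} (hc : c ≠ 0) (hfg : f * a + g * b = (c : R))
    {x : A} {y : B} (hx : a • x = 0) (hy : b • y = 0)
    {φ : (A × B) →ₗ[R] N} (hxy : (x, y) ∈ LinearMap.ker φ) :
    (x, (0 : B)) ∈ LinearMap.ker φ := by
  rw [LinearMap.mem_ker] at hxy ⊢
  have hc_smul : (c : R) • φ (x, 0) = 0 := by
    rw [← map_smul, Prod.smul_mk_zero_eq_smul_of_annihilated hx hy hfg, map_smul, hxy, smul_zero]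
  rw [Int.cast_smul_eq_zsmul] at hc_smul
  exact (smul_eq_zero.mp hc_smul).resolve_left hc

end

theorem stmt_8 (R : Type*) [CommRing R] (A B N : Type*)
    [AddCommGroup A] [AddCommGroup B] [AddCommGroup N]
    [Module R A] [Module R B] [Module R N] [NoZeroSMulDivisors ℤ N]
    (a b f g : R) (c : ℤ) (hc : c ≠ 0)
    (ha : ∀ x : A, a • x = 0) (hb : ∀ y : B, b • y = 0)
    (hfg : f * a + g * b = (c : R))
    (φ : (A × B) →ₗ[R] N) :
    ∀ x : A, ∀ y : B,
      ((x, y) ∈ LinearMap.ker φ ↔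
        ((x, (0 : B)) ∈ LinearMap.ker φ ∧ ((0 : A), y) ∈ LinearMap.ker φ)) := by
  intro x y
  constructor
  · intro hxy
    have hx0 := LinearMap.mk_zero_mem_ker_of_mk_mem_ker hc hfg (ha x) (hb y) hxy
    have h0y : ((0 : A), y) = (x, y) - (x, 0) := by simp
    exact ⟨hx0, h0y ▸ (LinearMap.ker φ).sub_mem hxy hx0⟩
  · rintro ⟨hx0, h0y⟩
    have hsplit : ((x, y) : A × B) = (x, 0) + (0, y) := by simp
    rw [hsplit]
    exact (LinearMap.ker φ).add_mem hx0 h0y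
end

section
/- Let G be a finite abelian group with a nonsingular symmetric bilinear form λ : G × G → Q/Z, and suppose G = A ⊕ B is an orthogonal direct sum with gcd(|A|, |B|) = 1. If P ⊆ G is a metabolizer (P = P^⊥), then P = (P ∩ A) ⊕ (P ∩ B), and P ∩ A and P ∩ B are metabolizers of the restricted forms on A and B respectively. -/
/-! Multiplying by `|A|` kills the `A`-component of an element of `P` while acting invertibly on
its `B`-component, so both components of an element of `P` lie in `P`. Hence `P` splits along
`A ⊕ B`, and since `A ⊥ B`, pairing an element of `A` against `P` only sees `P ∩ A`: the
self-annihilation `P = P^⊥` restricts to each summand. -/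

namespace AddSubgroup

variable {G : Type*} [AddCommGroup G]

theorem right_mem_of_add_mem_of_coprime {A B P : AddSubgroup G}
    (hcop : (Nat.card A).Coprime (Nat.card B)) {a b : G} (ha : a ∈ A) (hb : b ∈ B)
    (hab : a + b ∈ P) : b ∈ P := by
  have hkill : Nat.card A • (a + b) = Nat.card A • b := by
    rw [nsmul_add, addOrderOf_dvd_iff_nsmul_eq_zero.1 (A.addOrderOf_dvd_natCard ha), zero_add]
  obtain ⟨k, hk⟩ := exists_nsmul_eq_self_of_coprime
    (hcop.coprime_dvd_right (B.addOrderOf_dvd_natCard hb))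
  rw [← hk, ← hkill]
  exact P.nsmul_mem (P.nsmul_mem hab _) k

theorem eq_inf_sup_inf_of_coprime {A B : AddSubgroup G} (hsup : A ⊔ B = ⊤)
    (hcop : (Nat.card A).Coprime (Nat.card B)) (P : AddSubgroup G) :
    P = P ⊓ A ⊔ P ⊓ B := by
  refine le_antisymm (fun g hg => ?_) (sup_le inf_le_left inf_le_left)
  obtain ⟨a, ha, b, hb, rfl⟩ := mem_sup.1 (hsup ▸ mem_top g : g ∈ A ⊔ B)
  have hbP : b ∈ P := right_mem_of_add_mem_of_coprime hcop ha hb hg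
  have haP : a ∈ P := right_mem_of_add_mem_of_coprime hcop.symm hb ha (add_comm a b ▸ hg)
  exact add_mem_sup ⟨haP, ha⟩ ⟨hbP, hb⟩

theorem mem_inf_iff_forall_of_eq_inf_sup_inf {M : Type*} [AddCommGroup M]
    (l : G →+ G →+ M) {A B P : AddSubgroup G} (horth : ∀ a ∈ A, ∀ b ∈ B, l a b = 0)
    (hmet : ∀ g : G, g ∈ P ↔ ∀ p ∈ P, l g p = 0) (hsplit : P = P ⊓ A ⊔ P ⊓ B) :
    ∀ a ∈ A, (a ∈ P ⊓ A ↔ ∀ x ∈ P ⊓ A, l a x = 0) := by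
  refine fun a ha => ⟨fun haP x hx => (hmet a).1 haP.1 x hx.1, fun h => ⟨(hmet a).2 ?_, ha⟩⟩
  intro p hp
  obtain ⟨x, hx, y, hy, rfl⟩ := mem_sup.1 (hsplit ▸ hp : p ∈ P ⊓ A ⊔ P ⊓ B)
  rw [map_add, h x hx, horth a ha y hy.2, add_zero]

end AddSubgroup

theorem stmt_11_general (G : Type*) [AddCommGroup G]
    (l : G →+ G →+ AddCircle (1 : ℚ))
    (hsymm : ∀ x y : G, l x y = l y x)
    (A B : AddSubgroup G) (hsup : A ⊔ B = ⊤)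
    (horth : ∀ a ∈ A, ∀ b ∈ B, l a b = 0)
    (hcop : Nat.gcd (Nat.card A) (Nat.card B) = 1)
    (P : AddSubgroup G)
    (hmet : ∀ g : G, g ∈ P ↔ ∀ p ∈ P, l g p = 0) :
    P = (P ⊓ A) ⊔ (P ⊓ B) ∧
    (∀ a ∈ A, (a ∈ P ⊓ A ↔ ∀ x ∈ P ⊓ A, l a x = 0)) ∧
    (∀ b ∈ B, (b ∈ P ⊓ B ↔ ∀ x ∈ P ⊓ B, l b x = 0)) := by
  have hsplit : P = P ⊓ A ⊔ P ⊓ B := AddSubgroup.eq_inf_sup_inf_of_coprime hsup hcop P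
  have horth' : ∀ b ∈ B, ∀ a ∈ A, l b a = 0 := fun b hb a ha => hsymm a b ▸ horth a ha b hb
  exact ⟨hsplit, AddSubgroup.mem_inf_iff_forall_of_eq_inf_sup_inf l horth hmet hsplit,
    AddSubgroup.mem_inf_iff_forall_of_eq_inf_sup_inf l horth' hmet (sup_comm (P ⊓ A) _ ▸ hsplit)⟩

theorem stmt_11 (G : Type*) [AddCommGroup G] [Finite G]
    (l : G →+ G →+ AddCircle (1 : ℚ))
    (hsymm : ∀ x y : G, l x y = l y x)
    (hnonsing : Function.Bijective fun g : G => l g)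
    (A B : AddSubgroup G) (hsup : A ⊔ B = ⊤) (hinf : A ⊓ B = ⊥)
    (horth : ∀ a ∈ A, ∀ b ∈ B, l a b = 0)
    (hcop : Nat.gcd (Nat.card A) (Nat.card B) = 1)
    (P : AddSubgroup G)
    (hmet : ∀ g : G, g ∈ P ↔ ∀ p ∈ P, l g p = 0) :
    P = (P ⊓ A) ⊔ (P ⊓ B) ∧
    (∀ a ∈ A, (a ∈ P ⊓ A ↔ ∀ x ∈ P ⊓ A, l a x = 0)) ∧
    (∀ b ∈ B, (b ∈ P ⊓ B ↔ ∀ x ∈ P ⊓ B, l b x = 0)) :=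
  stmt_11_general G l hsymm A B hsup horth hcop P hmet
end
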